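/- T_H semantically entails H⁻ ∉ H⁻. -/

import Mathlib

open FirstOrder FirstOrder.Language

namespace CoRussellParadox

/-- The language `L'` with a single binary relation symbol `∈` and four constant
symbols `A`, `B`, `H⁺`, `H⁻` (coded as `Fin 4`). -/
def L : Language :=
  ⟨fun n => match n with | 0 => Fin 4 | _ => Empty,
   fun n => match n with | 2 => Unit | _ => Empty⟩

/-- The membership relation symbol. -/
def memRel : L.Relations 2 := Unit.unit

/-- The constant symbol `A`. -/
def cA : L.Constants := (0 : Fin 4)
/-- The constant symbol `B`. -/
def cB : L.Constants := (1 : Fin 4)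
/-- The constant symbol `H⁺`. -/
def cHp : L.Constants := (2 : Fin 4)
/-- The constant symbol `H⁻`. -/
def cHm : L.Constants := (3 : Fin 4)

/-- `memF t₁ t₂` is the atomic formula `t₁ ∈ t₂`. -/
def memF {n : ℕ} (t₁ t₂ : L.Term (Empty ⊕ Fin n)) : L.BoundedFormula Empty n :=
  memRel.boundedFormula₂ t₁ t₂

/-- Inclusion of a term in context `n` into the larger context `n + k`. -/
def tl {n : ℕ} (k : ℕ) (t : L.Term (Empty ⊕ Fin n)) : L.Term (Empty ⊕ Fin (n + k)) :=
  t.relabel (Sum.map id (Fin.castAdd k))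

/-- `z = ⟨a,b⟩` (Kuratowski pair), as the formula
`∃p∃q(∀x(x∈p ↔ x=a) ∧ ∀x(x∈q ↔ (x=a ∨ x=b)) ∧ ∀x(x∈z ↔ (x=p ∨ x=q)))`. -/
def isPairF {n : ℕ} (z a b : L.Term (Empty ⊕ Fin n)) : L.BoundedFormula Empty n :=
  ∃' ∃' (
    (∀' (memF (&⟨n + 2, by omega⟩) (&⟨n, by omega⟩) ⇔
        ((&(⟨n + 2, by omega⟩ : Fin (n + 3))) =' tl 3 a))) ⊓
    (∀' (memF (&⟨n + 2, by omega⟩) (&⟨n + 1, by omega⟩) ⇔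
        (((&(⟨n + 2, by omega⟩ : Fin (n + 3))) =' tl 3 a) ⊔
         ((&(⟨n + 2, by omega⟩ : Fin (n + 3))) =' tl 3 b)))) ⊓
    (∀' (memF (&⟨n + 2, by omega⟩) (tl 3 z) ⇔
        (((&(⟨n + 2, by omega⟩ : Fin (n + 3))) =' (&⟨n, by omega⟩)) ⊔
         ((&(⟨n + 2, by omega⟩ : Fin (n + 3))) =' (&⟨n + 1, by omega⟩))))))

/-- Extensionality: `∀y∀z(∀x(x∈y ↔ x∈z) → y=z)`. -/
def extAx : L.Sentence :=
  ∀' ∀' ((∀' (memF (&2) (&0) ⇔ memF (&2) (&1))) ⟹ ((&0) =' (&1)))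

/-- Pairing: `∀a∀b∃y∀x(x∈y ↔ (x=a ∨ x=b))`. -/
def pairAx : L.Sentence :=
  ∀' ∀' ∃' ∀' (memF (&3) (&2) ⇔ (((&3) =' (&0)) ⊔ ((&3) =' (&1))))

/-- Extracting: `∀a∃y∀x(x∈y ↔ ∃z(z=⟨a,x⟩ ∧ z∈a))`. -/
def extractAx : L.Sentence :=
  ∀' ∃' ∀' (memF (&2) (&1) ⇔ ∃' (isPairF (&3) (&0) (&2) ⊓ memF (&3) (&0)))

/-- `w = v[v]`, i.e. `∀u(u∈w ↔ ∃z(z=⟨v,u⟩ ∧ z∈v))`, here with `v = &1`, `w = &2`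
in context `3` (as used in the axioms for `A` and `B`). -/
def wEqExtractF : L.BoundedFormula Empty 3 :=
  ∀' (memF (&3) (&2) ⇔ ∃' (isPairF (&4) (&1) (&3) ⊓ memF (&4) (&1)))

/-- The axiom `∀x(x∈A ↔ ∃v∃w(x=⟨v,w⟩ ∧ (w∈w ∨ w=v[v])))`. -/
def axA : L.Sentence :=
  ∀' (memF (&0) (Constants.term cA) ⇔
    ∃' ∃' (isPairF (&0) (&1) (&2) ⊓ (memF (&2) (&2) ⊔ wEqExtractF)))

/-- The axiom `∀x(x∈B ↔ ∃v∃w(x=⟨v,w⟩ ∧ (w∈w ∧ ¬w=v[v])))`. -/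
def axB : L.Sentence :=
  ∀' (memF (&0) (Constants.term cB) ⇔
    ∃' ∃' (isPairF (&0) (&1) (&2) ⊓ (memF (&2) (&2) ⊓ ∼wEqExtractF)))

/-- The axiom `∀x(x∈H⁺ ↔ ∃z(z=⟨A,x⟩ ∧ z∈A))`. -/
def axHp : L.Sentence :=
  ∀' (memF (&0) (Constants.term cHp) ⇔
    ∃' (isPairF (&1) (Constants.term cA) (&0) ⊓ memF (&1) (Constants.term cA)))

/-- The axiom `∀x(x∈H⁻ ↔ ∃z(z=⟨B,x⟩ ∧ z∈B))`. -/
def axHm : L.Sentence :=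
  ∀' (memF (&0) (Constants.term cHm) ⇔
    ∃' (isPairF (&1) (Constants.term cB) (&0) ⊓ memF (&1) (Constants.term cB)))

/-- The theory `T_H`: extensionality, pairing, extracting, and the defining axioms
of `A`, `B`, `H⁺` and `H⁻`. -/
def TH : L.Theory := {extAx, pairAx, extractAx, axA, axB, axHp, axHm}

/-!
The axiom for `H⁻` says exactly that `H⁻ = B[B]`. If `H⁻ ∈ H⁻`, then `⟨B, H⁻⟩ ∈ B`, so by the
axiom for `B` it is a pair `⟨v, w⟩` with `¬ w = v[v]`. Kuratowski pairs are injective, so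
`v = B` and `w = H⁻`, contradicting `H⁻ = B[B]`.
-/

section KuratowskiPair

variable {α : Type*} (r : α → α → Prop)

def IsKPair (z a b : α) : Prop :=
  ∃ p q : α, (∀ x, r x p ↔ x = a) ∧ (∀ x, r x q ↔ x = a ∨ x = b) ∧
    (∀ x, r x z ↔ x = p ∨ x = q)

/-- `IsExtraction r w v` is `w = v[v]`. -/
def IsExtraction (w v : α) : Prop :=
  ∀ u, r u w ↔ ∃ z, IsKPair r z v u ∧ r z v

variable {r}

theorem IsKPair.inj {z a b c d : α} (h₁ : IsKPair r z a b) (h₂ : IsKPair r z c d) :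
    a = c ∧ b = d := by
  obtain ⟨p, q, hp, hq, hz⟩ := h₁
  obtain ⟨p', q', hp', hq', hz'⟩ := h₂
  have hp_mem : p = p' ∨ p = q' := (hz' p).1 ((hz p).2 (.inl rfl))
  have hq_mem : q = p' ∨ q = q' := (hz' q).1 ((hz q).2 (.inr rfl))
  have hq'_mem : q' = p ∨ q' = q := (hz q').1 ((hz' q').2 (.inr rfl))
  have hac : a = c := by
    rcases hp_mem with rfl | rfl
    · exact (hp' a).1 ((hp a).2 rfl)
    · exact ((hp c).1 ((hq' c).2 (.inl rfl))).symm
  subst hac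
  refine ⟨rfl, ?_⟩
  rcases hq'_mem with rfl | rfl
  · have hd : d = a := (hp d).1 ((hq' d).2 (.inr rfl))
    rcases hq_mem with rfl | rfl
    · rw [hd, ← hp' b, hq b]; exact .inr rfl
    · rw [hd, ← hp b, hq b]; exact .inr rfl
  · rcases (hq' b).1 ((hq b).2 (.inr rfl)) with hb | hb
    · rcases (hq d).1 ((hq' d).2 (.inr rfl)) with hd | hd
      · rw [hb, hd]
      · exact hd.symm
    · exact hb

theorem not_rel_self_of_isExtraction {b h : α}
    (hb : ∀ x, r x b → ∃ v w, IsKPair r x v w ∧ ¬IsExtraction r w v)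
    (hh : IsExtraction r h b) : ¬r h h := by
  intro hhh
  obtain ⟨z, hz, hzb⟩ := (hh h).1 hhh
  obtain ⟨v, w, hvw, hw⟩ := hb z hzb
  obtain ⟨rfl, rfl⟩ := hz.inj hvw
  exact hw hh

end KuratowskiPair

section Semantics

variable {M : Type*} [L.Structure M]

def Mem (x y : M) : Prop := Structure.RelMap memRel ![x, y]

theorem realize_memF {n} {t₁ t₂ : L.Term (Empty ⊕ Fin n)} {v : Empty → M} {xs : Fin n → M} :
    (memF t₁ t₂).Realize v xs ↔
      Mem (t₁.realize (Sum.elim v xs)) (t₂.realize (Sum.elim v xs)) := by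
  simp [memF, Mem, BoundedFormula.realize_rel₂]

theorem realize_tl_three {n} (t : L.Term (Empty ⊕ Fin n)) (v : Empty → M) (xs : Fin n → M)
    (p q r : M) :
    (tl 3 t).realize (Sum.elim v (Fin.snoc (Fin.snoc (Fin.snoc xs p) q) r)) =
      t.realize (Sum.elim v xs) := by
  rw [tl, Term.realize_relabel, Sum.elim_comp_map, Function.comp_id]
  congr 2
  funext i
  exact (Fin.snoc_castSucc _ _ _).trans ((Fin.snoc_castSucc _ _ _).trans (Fin.snoc_castSucc _ _ _))

theorem realize_isPairF {n} {z a b : L.Term (Empty ⊕ Fin n)} {v : Empty → M} {xs : Fin n → M} :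
    (isPairF z a b).Realize v xs ↔
      IsKPair Mem (z.realize (Sum.elim v xs)) (a.realize (Sum.elim v xs))
        (b.realize (Sum.elim v xs)) := by
  simp [isPairF, IsKPair, realize_memF, realize_tl_three, Fin.snoc, and_assoc]

theorem realize_wEqExtractF {v : Empty → M} {xs : Fin 3 → M} :
    wEqExtractF.Realize v xs ↔ IsExtraction Mem (xs 2) (xs 1) := by
  simp [wEqExtractF, IsExtraction, realize_memF, realize_isPairF, Fin.snoc]
  rfl

theorem realize_axB : M ⊨ axB ↔ ∀ x, Mem x (cB : M) ↔
    ∃ v w, IsKPair Mem x v w ∧ Mem w w ∧ ¬IsExtraction Mem w v := by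
  simp [axB, Sentence.Realize, Formula.Realize, realize_memF, realize_isPairF,
    realize_wEqExtractF, Fin.snoc]

theorem realize_axHm : M ⊨ axHm ↔ IsExtraction Mem (cHm : M) (cB : M) := by
  simp [axHm, IsExtraction, Sentence.Realize, Formula.Realize, realize_memF, realize_isPairF,
    Fin.snoc]

end Semantics

/-- `T_H` semantically entails `H⁻ ∉ H⁻`. -/
theorem TH_Hm_not_mem_Hm :
    TH ⊨ᵇ ((∼(memF (Constants.term cHm) (Constants.term cHm))) : L.Sentence) := by
  rw [Theory.models_sentence_iff]
  intro M
  have hB := realize_axB.1 (M.is_model.realize_of_mem axB (by simp [TH]))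
  have hHm := realize_axHm.1 (M.is_model.realize_of_mem axHm (by simp [TH]))
  have hB_pairs (x : M) (hx : Mem x (cB : M)) :
      ∃ v w, IsKPair Mem x v w ∧ ¬IsExtraction Mem w v :=
    let ⟨v, w, hvw, _, hw⟩ := (hB x).1 hx
    ⟨v, w, hvw, hw⟩
  simpa [Sentence.Realize, Formula.Realize, realize_memF] using
    not_rel_self_of_isExtraction hB_pairs hHm

end CoRussellParadox
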